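/- Let Q be a finite simple graph with n vertices and m edges. Then the first Zagreb index of the transformation graph Q_{rs}^{+++} (the case p = r, q = s of Q_{rs}^{x(p) y(q) +}) equals (r(s² + 6s + 1) − 4s)·M1(Q) + 2s·M2(Q) + s·F(Q) + 4ms(r−1)². -/
import Mathlib


/-- Classical `Fintype` instance for neighbor sets of graphs on finite types. -/
noncomputable instance fintypeNeighborSetOfFinite {W : Type*} [Finite W]
    (G : SimpleGraph W) (v : W) : Fintype (G.neighborSet v) :=
  Fintype.ofFinite _

/-- Classical `Fintype` instance for the edge set of a graph on a finite type. -/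
noncomputable instance fintypeEdgeSetOfFinite {W : Type*} [Finite W]
    (G : SimpleGraph W) : Fintype G.edgeSet :=
  Fintype.ofFinite _

/-- The first Zagreb index `M₁(G) = Σ_v d(v)²`. -/
noncomputable def zagrebM1 {W : Type*} [Fintype W] (G : SimpleGraph W) : ℕ :=
  ∑ v, G.degree v ^ 2

/-- The second Zagreb index `M₂(G) = Σ_{uv ∈ E(G)} d(u)·d(v)`. -/
noncomputable def zagrebM2 {W : Type*} [Fintype W] (G : SimpleGraph W) : ℕ :=
  ∑ e ∈ G.edgeFinset,
    Sym2.lift ⟨fun u v => G.degree u * G.degree v, fun u v => Nat.mul_comm (G.degree u) (G.degree v)⟩ e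

/-- The forgotten index `F(G) = Σ_v d(v)³`. -/
noncomputable def forgottenF {W : Type*} [Fintype W] (G : SimpleGraph W) : ℕ :=
  ∑ v, G.degree v ^ 3

/-- The `(r,s)`-generalised transformation graph `Q_{rs}^{x(p) y(q) +}`.
Its vertices are `r` copies of `V(Q)` (indexed by `Fin r`) together with `s`
copies of `E(Q)` (indexed by `Fin s`).  The copy `V_g` carries the adjacency of
`Q` when `g < p` and that of the complement when `g ≥ p`; the copy `E_h`
carries line-graph adjacency (sharing an endpoint) when `h < q` and its
complement when `h ≥ q`; a vertex-copy vertex and an edge-copy vertex are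
adjacent iff the vertex is incident with the edge in `Q`. -/
def genTransPlus {V : Type*} (Q : SimpleGraph V) (r s p q : ℕ) :
    SimpleGraph ((Fin r × V) ⊕ (Fin s × Q.edgeSet)) :=
  SimpleGraph.fromRel (fun a b =>
    match a, b with
    | Sum.inl (g, α), Sum.inl (g', β) =>
        g = g' ∧ (((g : ℕ) < p ∧ Q.Adj α β) ∨ (¬ (g : ℕ) < p ∧ ¬ Q.Adj α β))
    | Sum.inr (h, e), Sum.inr (h', f) =>
        h = h' ∧ (((h : ℕ) < q ∧ ∃ w, w ∈ (e : Sym2 V) ∧ w ∈ (f : Sym2 V)) ∨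
                  (¬ (h : ℕ) < q ∧ ¬ ∃ w, w ∈ (e : Sym2 V) ∧ w ∈ (f : Sym2 V)))
    | Sum.inl (_, α), Sum.inr (_, e) => α ∈ (e : Sym2 V)
    | Sum.inr (_, e), Sum.inl (_, α) => α ∈ (e : Sym2 V))


section Aux
set_option linter.unusedSectionVars false
set_option linter.unusedVariables false

variable {V : Type*} [Fintype V] {Q : SimpleGraph V} {r s : ℕ}

lemma adj_inl_inl (g g' : Fin r) (α β : V) :
    (genTransPlus Q r s r s).Adj (Sum.inl (g,α)) (Sum.inl (g',β)) ↔ g = g' ∧ Q.Adj α β := by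
  simp only [genTransPlus, SimpleGraph.fromRel_adj, g.isLt, g'.isLt, true_and, not_true,
    false_and, or_false]
  constructor
  · rintro ⟨hne, ⟨rfl, h⟩ | ⟨rfl, h⟩⟩
    · exact ⟨rfl, h⟩
    · exact ⟨rfl, h.symm⟩
  · rintro ⟨rfl, h⟩
    exact ⟨by simp [h.ne], Or.inl ⟨rfl, h⟩⟩

lemma adj_inl_inr (g : Fin r) (α : V) (h : Fin s) (e : Q.edgeSet) :
    (genTransPlus Q r s r s).Adj (Sum.inl (g,α)) (Sum.inr (h,e)) ↔ α ∈ (e : Sym2 V) := by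
  simp only [genTransPlus, SimpleGraph.fromRel_adj]
  simp

lemma adj_inr_inl (g : Fin r) (α : V) (h : Fin s) (e : Q.edgeSet) :
    (genTransPlus Q r s r s).Adj (Sum.inr (h,e)) (Sum.inl (g,α)) ↔ α ∈ (e : Sym2 V) := by
  simp only [genTransPlus, SimpleGraph.fromRel_adj]
  simp

lemma adj_inr_inr (h h' : Fin s) (e f : Q.edgeSet) :
    (genTransPlus Q r s r s).Adj (Sum.inr (h,e)) (Sum.inr (h',f)) ↔
      h = h' ∧ e ≠ f ∧ ∃ w, w ∈ (e : Sym2 V) ∧ w ∈ (f : Sym2 V) := by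
  simp only [genTransPlus, SimpleGraph.fromRel_adj, h.isLt, h'.isLt, true_and, not_true,
    false_and, or_false]
  constructor
  · rintro ⟨hne, ⟨rfl, w, hw1, hw2⟩ | ⟨rfl, w, hw1, hw2⟩⟩
    · exact ⟨rfl, fun hef => hne (by rw [hef]), w, hw1, hw2⟩
    · exact ⟨rfl, fun hef => hne (by rw [hef]), w, hw2, hw1⟩
  · rintro ⟨rfl, hef, w, hw1, hw2⟩
    exact ⟨by simp [hef], Or.inl ⟨rfl, w, hw1, hw2⟩⟩

open scoped Classical in
lemma sum_ite_mem_edge (α : V) :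
    ∑ e : Q.edgeSet, (if α ∈ (e : Sym2 V) then 1 else 0) = Q.degree α := by
  classical
  rw [← Finset.sum_subtype Q.edgeFinset (fun x => Q.mem_edgeFinset)
      (fun e => if α ∈ e then 1 else 0)]
  rw [← Finset.card_filter, ← Q.incidenceFinset_eq_filter, Q.card_incidenceFinset_eq_degree]

open scoped Classical in
lemma sum_ite_share (u v : V) (huv : Q.Adj u v) :
    (∑ f : Q.edgeSet, if (s(u,v) ≠ (f : Sym2 V) ∧ ∃ w, w ∈ s(u,v) ∧ w ∈ (f : Sym2 V))
        then 1 else 0) + 2 = Q.degree u + Q.degree v := by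
  classical
  rw [← Finset.sum_subtype Q.edgeFinset (fun x => Q.mem_edgeFinset)
      (fun x => if (s(u,v) ≠ x ∧ ∃ w, w ∈ s(u,v) ∧ w ∈ x) then 1 else 0), ← Finset.card_filter]
  have hfil : Q.edgeFinset.filter (fun x => s(u,v) ≠ x ∧ ∃ w, w ∈ s(u,v) ∧ w ∈ x)
      = (Q.incidenceFinset u ∪ Q.incidenceFinset v).erase s(u,v) := by
    ext x
    simp only [Finset.mem_filter, Finset.mem_erase, Finset.mem_union,
      SimpleGraph.mem_incidenceFinset, SimpleGraph.mem_edgeFinset, Sym2.mem_iff,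
      SimpleGraph.incidenceSet, Set.mem_setOf_eq, Set.mem_sep_iff, SimpleGraph.mem_edgeSet]
    constructor
    · rintro ⟨hx, hne, w, (rfl | rfl), hw⟩
      · exact ⟨hne.symm, Or.inl ⟨hx, hw⟩⟩
      · exact ⟨hne.symm, Or.inr ⟨hx, hw⟩⟩
    · rintro ⟨hne, ⟨hx, hw⟩ | ⟨hx, hw⟩⟩
      · exact ⟨hx, hne.symm, u, Or.inl rfl, hw⟩
      · exact ⟨hx, hne.symm, v, Or.inr rfl, hw⟩
  have hmem : s(u,v) ∈ Q.incidenceFinset u ∪ Q.incidenceFinset v := by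
    simp [SimpleGraph.mem_incidenceFinset, SimpleGraph.incidenceSet, huv]
  have hins : Q.incidenceFinset u ∩ Q.incidenceFinset v = {s(u,v)} := by
    ext x
    simp only [Finset.mem_inter, SimpleGraph.mem_incidenceFinset,
      SimpleGraph.incidenceSet, Set.mem_sep_iff, Finset.mem_singleton]
    constructor
    · rintro ⟨⟨hx, hu⟩, ⟨_, hv⟩⟩
      exact (Sym2.mem_and_mem_iff huv.ne).mp ⟨hu, hv⟩
    · rintro rfl
      exact ⟨⟨Q.mem_edgeSet.mpr huv, by simp⟩, ⟨Q.mem_edgeSet.mpr huv, by simp⟩⟩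
  have hcard : (Q.incidenceFinset u ∪ Q.incidenceFinset v).card + 1
      = Q.degree u + Q.degree v := by
    rw [← Q.card_incidenceFinset_eq_degree, ← Q.card_incidenceFinset_eq_degree,
      ← Finset.card_union_add_card_inter, hins, Finset.card_singleton]
  have h1 : 1 ≤ (Q.incidenceFinset u ∪ Q.incidenceFinset v).card :=
    Finset.card_pos.mpr ⟨_, hmem⟩
  rw [hfil, Finset.card_erase_of_mem hmem]
  omega

open scoped Classical in
lemma degree_eq_sum_ite {W : Type*} [Fintype W] (G : SimpleGraph W) (v : W)
    [Fintype (G.neighborSet v)] :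
    G.degree v = ∑ w, if G.Adj v w then 1 else 0 := by
  classical
  have hnb : G.neighborFinset v = Finset.univ.filter (G.Adj v) := by
    ext w; simp [SimpleGraph.mem_neighborFinset]
  rw [SimpleGraph.degree, hnb, Finset.card_filter]

lemma degree_inl (g : Fin r) (α : V) :
    (genTransPlus Q r s r s).degree (Sum.inl (g,α)) = (1 + s) * Q.degree α := by
  classical
  rw [degree_eq_sum_ite, Fintype.sum_sum_type]
  have h1 : (∑ a : Fin r × V,
      if (genTransPlus Q r s r s).Adj (Sum.inl (g,α)) (Sum.inl a) then 1 else 0)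
      = Q.degree α := by
    rw [Fintype.sum_prod_type]
    simp only [adj_inl_inl, ite_and]
    rw [Finset.sum_comm]
    simp only [Finset.sum_ite_eq, Finset.mem_univ, if_true]
    rw [← degree_eq_sum_ite]
  have h2 : (∑ b : Fin s × Q.edgeSet,
      if (genTransPlus Q r s r s).Adj (Sum.inl (g,α)) (Sum.inr b) then 1 else 0)
      = s * Q.degree α := by
    rw [Fintype.sum_prod_type]
    simp only [adj_inl_inr]
    rw [Finset.sum_const, Finset.card_univ, Fintype.card_fin]
    rw [sum_ite_mem_edge α, smul_eq_mul]
  rw [h1, h2]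
  ring

lemma degree_inr (h : Fin s) (e : Q.edgeSet) :
    (genTransPlus Q r s r s).degree (Sum.inr (h,e)) + 2 =
      2 * r + Sym2.lift ⟨fun u v => Q.degree u + Q.degree v,
        fun u v => Nat.add_comm _ _⟩ (e : Sym2 V) := by
  classical
  obtain ⟨e', he'⟩ := e
  revert he'
  refine Sym2.inductionOn e' ?_
  intro u v he'
  have huv : Q.Adj u v := Q.mem_edgeSet.mp he'
  rw [degree_eq_sum_ite, Fintype.sum_sum_type]
  have h1 : (∑ a : Fin r × V,
      if (genTransPlus Q r s r s).Adj (Sum.inr (h, ⟨s(u,v), he'⟩)) (Sum.inl a) then 1 else 0)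
      = 2 * r := by
    rw [Fintype.sum_prod_type]
    have hfil : (Finset.univ.filter (fun α => α ∈ (s(u,v) : Sym2 V))) = {u, v} := by
      ext w; simp [Sym2.mem_iff]
    have : ∀ g : Fin r, (∑ α : V,
        if (genTransPlus Q r s r s).Adj (Sum.inr (h, ⟨s(u,v), he'⟩)) (Sum.inl (g,α))
        then 1 else 0) = 2 := by
      intro g
      simp only [adj_inr_inl]
      rw [← Finset.card_filter, hfil, Finset.card_pair huv.ne]
    simp only [this, Finset.sum_const, Finset.card_univ, Fintype.card_fin, smul_eq_mul]
    ring
  have h2 : (∑ b : Fin s × Q.edgeSet,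
      if (genTransPlus Q r s r s).Adj (Sum.inr (h, ⟨s(u,v), he'⟩)) (Sum.inr b) then 1 else 0)
      + 2 = Q.degree u + Q.degree v := by
    rw [Fintype.sum_prod_type]
    have hiff : ∀ (h' : Fin s) (f : Q.edgeSet),
        (genTransPlus Q r s r s).Adj (Sum.inr (h, ⟨s(u,v), he'⟩)) (Sum.inr (h', f)) ↔
        (h = h' ∧ (s(u,v) ≠ (f : Sym2 V) ∧ ∃ w, w ∈ s(u,v) ∧ w ∈ (f : Sym2 V))) := by
      intro h' f
      rw [adj_inr_inr]
      constructor
      · rintro ⟨rfl, hne, hsh⟩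
        exact ⟨rfl, fun hv => hne (Subtype.ext hv.symm).symm, hsh⟩
      · rintro ⟨rfl, hne, hsh⟩
        exact ⟨rfl, fun hv => hne (congrArg Subtype.val hv), hsh⟩
    simp only [hiff, ite_and]
    rw [Finset.sum_comm]
    simp only [Finset.sum_ite_eq, Finset.mem_univ, if_true]
    rw [← sum_ite_share u v huv]
    congr 1
    exact Finset.sum_congr rfl fun f _ => by rw [← ite_and]
  rw [h1, Sym2.lift_mk]
  change _ = 2 * r + (Q.degree u + Q.degree v)
  omega

open scoped Classical in
lemma sum_over_edges (g : V → ℤ) :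
    ∑ e ∈ Q.edgeFinset, Sym2.lift ⟨fun u v => g u + g v, fun u v => add_comm _ _⟩ e
      = ∑ w, (Q.degree w : ℤ) * g w := by
  classical
  have step : ∀ e ∈ Q.edgeFinset,
      Sym2.lift ⟨fun u v => g u + g v, fun u v => add_comm _ _⟩ e
        = ∑ w, if w ∈ e then g w else 0 := by
    intro e
    refine Sym2.inductionOn e ?_
    intro u v he
    have hne : u ≠ v := (Q.mem_edgeSet.mp (SimpleGraph.mem_edgeFinset.mp he)).ne
    rw [Sym2.lift_mk, ← Finset.sum_filter]
    have hfil : Finset.univ.filter (fun w => w ∈ (s(u,v) : Sym2 V)) = {u, v} := by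
      ext w; simp [Sym2.mem_iff]
    rw [hfil, Finset.sum_pair hne]
  rw [Finset.sum_congr rfl step, Finset.sum_comm]
  refine Finset.sum_congr rfl fun w _ => ?_
  rw [← Finset.sum_filter, Finset.sum_const, ← Q.incidenceFinset_eq_filter,
    Q.card_incidenceFinset_eq_degree, nsmul_eq_mul]
end Aux

/-- First Zagreb index of `Q_{rs}^{+++}`, i.e. the case `p = r`, `q = s`. -/
theorem zagrebM1_genTransPlus_ppp
    {V : Type*} [Fintype V] (Q : SimpleGraph V)
    (r s n m : ℕ) (hr : 0 < r) (hs : 0 < s)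
    (hn : Fintype.card V = n) (hm : Q.edgeFinset.card = m) :
    (zagrebM1 (genTransPlus Q r s r s) : ℤ) =
      ((r : ℤ) * ((s : ℤ) ^ 2 + 6 * s + 1) - 4 * s) * zagrebM1 Q
      + 2 * s * zagrebM2 Q + s * forgottenF Q
      + 4 * m * s * ((r : ℤ) - 1) ^ 2 := by
  classical
  have key : (zagrebM1 (genTransPlus Q r s r s) : ℤ) = ∑ x : (Fin r × V) ⊕ (Fin s × Q.edgeSet),
      ((genTransPlus Q r s r s).degree x : ℤ) ^ 2 := by
    rw [zagrebM1]; push_cast; rfl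
  have hM1 : ((zagrebM1 Q : ℤ)) = ∑ α, (Q.degree α : ℤ)^2 := by
    rw [zagrebM1]; push_cast; rfl
  rw [key, Fintype.sum_sum_type, Fintype.sum_prod_type, Fintype.sum_prod_type]
  -- vertex part
  have hA : ∑ g : Fin r, ∑ α : V, ((genTransPlus Q r s r s).degree (Sum.inl (g, α)) : ℤ)^2
      = (r : ℤ) * ((1+s:ℤ))^2 * zagrebM1 Q := by
    have h1 : ∀ (g : Fin r) (α : V), ((genTransPlus Q r s r s).degree (Sum.inl (g, α)) : ℤ)^2
        = (1+s:ℤ)^2 * (Q.degree α : ℤ)^2 := by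
      intro g α; rw [degree_inl]; push_cast; ring
    simp only [h1, ← Finset.mul_sum, Finset.sum_const, Finset.card_univ, Fintype.card_fin,
      nsmul_eq_mul, hM1]
    ring
  -- edge part
  have hdeg : ∀ (h : Fin s) (e : Q.edgeSet), ((genTransPlus Q r s r s).degree (Sum.inr (h,e)) : ℤ)
      = ((Sym2.lift ⟨fun u v => (Q.degree u : ℤ) + (Q.degree v : ℤ),
          fun u v => add_comm _ _⟩ (e : Sym2 V))) + 2*r - 2 := by
    intro h e
    have h2 : ((Sym2.lift ⟨fun u v => Q.degree u + Q.degree v,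
        fun u v => Nat.add_comm _ _⟩ (e : Sym2 V) : ℕ) : ℤ)
        = Sym2.lift ⟨fun u v => (Q.degree u : ℤ) + (Q.degree v : ℤ),
          fun u v => add_comm _ _⟩ (e : Sym2 V) := by
      refine Sym2.inductionOn (e : Sym2 V) ?_
      intro u v; simp [Sym2.lift_mk]
    have := degree_inr (Q:=Q) (r:=r) h e
    have hc : (((genTransPlus Q r s r s).degree (Sum.inr (h,e)) : ℕ) : ℤ) + 2 = 2*(r:ℤ) +
        ((Sym2.lift ⟨fun u v => Q.degree u + Q.degree v,
          fun u v => Nat.add_comm _ _⟩ (e : Sym2 V) : ℕ) : ℤ) := by exact_mod_cast this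
    rw [h2] at hc
    linarith
  have hB : ∑ h : Fin s, ∑ e : Q.edgeSet, ((genTransPlus Q r s r s).degree (Sum.inr (h, e)) : ℤ)^2
      = (s:ℤ) * ((forgottenF Q : ℤ) + 2 * zagrebM2 Q + (4*r - 4) * zagrebM1 Q
          + (m:ℤ) * (2*r-2)^2) := by
    simp only [hdeg]
    rw [Finset.sum_const, Finset.card_univ, Fintype.card_fin, nsmul_eq_mul]
    congr 1
    rw [← Finset.sum_subtype Q.edgeFinset (fun x => Q.mem_edgeFinset)
      (fun x => (Sym2.lift ⟨fun u v => (Q.degree u : ℤ) + (Q.degree v : ℤ),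
          fun u v => add_comm _ _⟩ x + 2*(r:ℤ) - 2)^2)]
    have hexp : ∀ x ∈ Q.edgeFinset,
        (Sym2.lift ⟨fun u v => (Q.degree u : ℤ) + (Q.degree v : ℤ),
          fun u v => add_comm _ _⟩ x + 2*(r:ℤ) - 2)^2
        = Sym2.lift ⟨fun u v => (Q.degree u : ℤ)^2 + (Q.degree v : ℤ)^2,
            fun u v => add_comm _ _⟩ x
          + 2 * Sym2.lift ⟨fun u v => (Q.degree u : ℤ) * (Q.degree v : ℤ),
            fun u v => mul_comm _ _⟩ x
          + (4*(r:ℤ) - 4) * Sym2.lift ⟨fun u v => (Q.degree u : ℤ) + (Q.degree v : ℤ),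
            fun u v => add_comm _ _⟩ x
          + (2*(r:ℤ)-2)^2 := by
      intro x _
      refine Sym2.inductionOn x ?_
      intro u v; simp only [Sym2.lift_mk]; ring
    rw [Finset.sum_congr rfl hexp]
    rw [Finset.sum_add_distrib, Finset.sum_add_distrib, Finset.sum_add_distrib,
      Finset.sum_const, ← Finset.mul_sum, ← Finset.mul_sum, hm, nsmul_eq_mul]
    have hF : ∑ x ∈ Q.edgeFinset, Sym2.lift ⟨fun u v => (Q.degree u : ℤ)^2 + (Q.degree v : ℤ)^2,
        fun u v => add_comm _ _⟩ x = (forgottenF Q : ℤ) := by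
      rw [sum_over_edges (Q:=Q) (fun w => (Q.degree w : ℤ)^2), forgottenF]
      push_cast
      exact Finset.sum_congr rfl fun w _ => by ring
    have hL : ∑ x ∈ Q.edgeFinset, Sym2.lift ⟨fun u v => (Q.degree u : ℤ) + (Q.degree v : ℤ),
        fun u v => add_comm _ _⟩ x = (zagrebM1 Q : ℤ) := by
      rw [sum_over_edges (Q:=Q) (fun w => (Q.degree w : ℤ)), hM1]
      exact Finset.sum_congr rfl fun w _ => by ring
    have hP : ∑ x ∈ Q.edgeFinset, Sym2.lift ⟨fun u v => (Q.degree u : ℤ) * (Q.degree v : ℤ),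
        fun u v => mul_comm _ _⟩ x = (zagrebM2 Q : ℤ) := by
      rw [zagrebM2]
      push_cast
      refine Finset.sum_congr rfl fun x _ => ?_
      refine Sym2.inductionOn x fun u v => ?_
      simp only [Sym2.lift_mk]
      push_cast
      ring
    rw [hF, hL, hP]
  rw [hA, hB]
  push_cast
  ring
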